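/- arXiv:1811.00582 — 2 statements merged into one kernel-verified Lean document; each statement's English description precedes it below -/
import Mathlib

section
/- Let 1<α<2 and α−1<β<1, let K:[0,1]→ℝ satisfy K(x) ≥ K_m > 0 for all x, let f:(0,1)→ℝ be measurable with ‖f‖_{ω^{(β,α−β)}} < ∞, and set f₁(x) := (1/K(x))·∫₀^x f(y)dy. Then ‖f₁‖_{ω^{(β−1,α−β−1)}} ≤ (1/K_m)·( B(α−β,β)·B(1−(α−β),1−β) )^{1/2}·‖f‖_{ω^{(β,α−β)}}, where B(a,b) := Γ(a)Γ(b)/Γ(a+b) is the Beta function. -/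
open MeasureTheory Real Filter

/-- The weight function ω^{(a,b)}(x) = (1-x)^a x^b. -/
noncomputable def jw (a b x : ℝ) : ℝ := (1 - x) ^ a * x ^ b

/-- The weighted L² norm ‖g‖_{ω^{(a,b)}}. -/
noncomputable def jwNorm (a b : ℝ) (g : ℝ → ℝ) : ℝ :=
  Real.sqrt (∫ x in (0:ℝ)..1, jw a b x * g x ^ 2)

/-- The Beta function B(a,b) = Γ(a)Γ(b)/Γ(a+b). -/
noncomputable def Betaf (a b : ℝ) : ℝ :=
  Real.Gamma a * Real.Gamma b / Real.Gamma (a + b)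

/-- Generalized binomial coefficient binom(x,k) = Γ(x+1)/(Γ(k+1)Γ(x-k+1)). -/
noncomputable def rbinom (x : ℝ) (k : ℕ) : ℝ :=
  Real.Gamma (x + 1) / (Real.Gamma ((k : ℝ) + 1) * Real.Gamma (x - (k : ℝ) + 1))

/-- Jacobi polynomial on [0,1]: G_n^{(a,b)}(t). -/
noncomputable def JacobiG (n : ℕ) (a b : ℝ) (t : ℝ) : ℝ :=
  ∑ m ∈ Finset.range (n + 1),
    (2 : ℝ) ^ (-(n : ℝ)) * rbinom ((n : ℝ) + a) m * rbinom ((n : ℝ) + b) (n - m) *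
      (2 * t - 2) ^ (n - m) * (2 * t) ^ m

/-- The weighted norm value |‖G_n^{(a,b)}‖|. -/
noncomputable def GNormVal (n : ℕ) (a b : ℝ) : ℝ :=
  Real.sqrt (Real.Gamma ((n : ℝ) + a + 1) * Real.Gamma ((n : ℝ) + b + 1) /
    ((2 * (n : ℝ) + a + b + 1) * Real.Gamma ((n : ℝ) + 1) * Real.Gamma ((n : ℝ) + a + b + 1)))

/-- Jacobi coefficient of g with respect to G_j^{(a,b)} in L²_{ω^{(a,b)}}. -/
noncomputable def jcoeff (a b : ℝ) (g : ℝ → ℝ) (j : ℕ) : ℝ :=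
  (∫ x in (0:ℝ)..1, jw a b x * g x * JacobiG j a b x) / GNormVal j a b ^ 2

/-- Left Riemann-Liouville fractional integral (₀I_x^σ g)(x). -/
noncomputable def leftI (σ : ℝ) (g : ℝ → ℝ) (x : ℝ) : ℝ :=
  (1 / Real.Gamma σ) * ∫ s in (0:ℝ)..x, g s * (x - s) ^ (σ - 1)

/-- Right Riemann-Liouville fractional integral (ₓI₁^σ g)(x). -/
noncomputable def rightI (σ : ℝ) (g : ℝ → ℝ) (x : ℝ) : ℝ :=
  (1 / Real.Gamma σ) * ∫ s in x..(1:ℝ), g s * (s - x) ^ (σ - 1)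

/-- The eigenvalues λ_n = (sin(πα)/(sin(π(α-β)) + sin(πβ)))·Γ(n+α)/n!. -/
noncomputable def lamCoef (α β : ℝ) (n : ℕ) : ℝ :=
  (Real.sin (π * α) / (Real.sin (π * (α - β)) + Real.sin (π * β))) *
    Real.Gamma ((n : ℝ) + α) / (Nat.factorial n : ℝ)

/-- f₁(x) = (1/K(x))·∫₀ˣ f(y) dy. -/
noncomputable def fOne (K f : ℝ → ℝ) (x : ℝ) : ℝ := (1 / K x) * ∫ y in (0:ℝ)..x, f y

/-- f₂(x) = 1/K(x). -/
noncomputable def fTwo (K : ℝ → ℝ) (x : ℝ) : ℝ := 1 / K x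

/-- The Jacobi coefficients f_{k,j} of f₁ (k = 1) and f₂ (k = 2) w.r.t. G_j^{(β-1,α-β-1)}. -/
noncomputable def fCoef (α β : ℝ) (K f : ℝ → ℝ) (k : ℕ) (j : ℕ) : ℝ :=
  jcoeff (β - 1) (α - β - 1) (if k = 1 then fOne K f else fTwo K) j

/-- The constant A = f_{1,0}/f_{2,0}. -/
noncomputable def Aconst (α β : ℝ) (K f : ℝ → ℝ) : ℝ :=
  fCoef α β K f 1 0 / fCoef α β K f 2 0

/-- The solution coefficients c_j = (−f_{1,j+1} + A·f_{2,j+1})/λ_j. -/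
noncomputable def cCoef (α β : ℝ) (K f : ℝ → ℝ) (j : ℕ) : ℝ :=
  (-(fCoef α β K f 1 (j + 1)) + Aconst α β K f * fCoef α β K f 2 (j + 1)) / lamCoef α β j


/-! Weighted Cauchy–Schwarz gives, uniformly in `x ∈ [0,1]`,
`(∫₀ˣ f)² ≤ (∫₀¹ ω^{(β,α-β)} f²) · ∫₀¹ 1/ω^{(β,α-β)}`, and `1/ω^{(β,α-β)} = ω^{(-β,β-α)}` is a
Beta integrand with integral `B(1-(α-β), 1-β)`. Bounding `1/K²` by `1/K_m²` and integrating the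
uniform bound against `ω^{(β-1,α-β-1)}` produces the second factor `B(α-β, β)`. -/

open Set

lemma jw_nonneg {a b x : ℝ} (hx : x ∈ Icc (0:ℝ) 1) : 0 ≤ jw a b x :=
  mul_nonneg (Real.rpow_nonneg (by linarith [hx.2]) _) (Real.rpow_nonneg hx.1 _)

lemma jw_pos {a b x : ℝ} (hx : x ∈ Ioo (0:ℝ) 1) : 0 < jw a b x :=
  mul_pos (Real.rpow_pos_of_pos (by linarith [hx.2]) _) (Real.rpow_pos_of_pos hx.1 _)

lemma jw_neg {a b x : ℝ} (hx : x ∈ Icc (0:ℝ) 1) : jw (-a) (-b) x = (jw a b x)⁻¹ := by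
  rw [jw, jw, Real.rpow_neg (by linarith [hx.2]), Real.rpow_neg hx.1, mul_inv]

lemma ofReal_jw_sub_one {a b x : ℝ} (hx : x ∈ Icc (0:ℝ) 1) :
    ((jw (a - 1) (b - 1) x : ℝ) : ℂ) = (x : ℂ) ^ ((b : ℂ) - 1) * (1 - (x : ℂ)) ^ ((a : ℂ) - 1) := by
  rw [jw, Complex.ofReal_mul, Complex.ofReal_cpow (by linarith [hx.2]), Complex.ofReal_cpow hx.1]
  push_cast
  ring

lemma intervalIntegrable_jw_sub_one {a b : ℝ} (ha : 0 < a) (hb : 0 < b) :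
    IntervalIntegrable (jw (a - 1) (b - 1)) volume 0 1 := by
  have h := Complex.betaIntegral_convergent (u := b) (v := a) (by simpa) (by simpa)
  have hc : IntervalIntegrable (fun x => ((jw (a - 1) (b - 1) x : ℝ) : ℂ)) volume 0 1 :=
    h.congr fun x hx => (ofReal_jw_sub_one (by simpa using Ioc_subset_Icc_self hx)).symm
  exact (intervalIntegrable_iff_integrableOn_Ioc_of_le zero_le_one).2 hc.1.re

lemma integral_jw_sub_one {a b : ℝ} (ha : 0 < a) (hb : 0 < b) :
    ∫ x in (0:ℝ)..1, jw (a - 1) (b - 1) x = Betaf b a := by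
  have h : ((∫ x in (0:ℝ)..1, jw (a - 1) (b - 1) x : ℝ) : ℂ) = Complex.betaIntegral b a := by
    rw [← intervalIntegral.integral_ofReal, Complex.betaIntegral]
    exact intervalIntegral.integral_congr fun x hx =>
      ofReal_jw_sub_one (by simpa [uIcc_of_le zero_le_one] using hx)
  rw [Betaf, ← ProbabilityTheory.beta, ProbabilityTheory.beta_eq_betaIntegralReal b a hb ha, ← h,
    Complex.ofReal_re]

section CauchySchwarz

variable {α : Type*} [MeasurableSpace α] {μ : Measure α}

lemma integral_mul_le_sqrt_mul_sqrt_of_nonneg {φ ψ : α → ℝ} (hφ0 : 0 ≤ᵐ[μ] φ) (hψ0 : 0 ≤ᵐ[μ] ψ)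
    (hφ : MemLp φ 2 μ) (hψ : MemLp ψ 2 μ) :
    ∫ x, φ x * ψ x ∂μ ≤ √(∫ x, φ x ^ 2 ∂μ) * √(∫ x, ψ x ^ 2 ∂μ) := by
  have h := integral_mul_le_Lp_mul_Lq_of_nonneg Real.HolderConjugate.two_two hφ0 hψ0
    (by rwa [ENNReal.ofReal_ofNat]) (by rwa [ENNReal.ofReal_ofNat])
  simpa only [Real.rpow_two, Real.sqrt_eq_rpow] using h

lemma sq_integral_le_integral_mul_sq_mul_integral_inv {w f : α → ℝ} (hw : ∀ᵐ x ∂μ, 0 < w x)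
    (hf : AEStronglyMeasurable f μ) (hwf : Integrable (fun x => w x * f x ^ 2) μ)
    (hwinv : Integrable (fun x => (w x)⁻¹) μ) :
    (∫ x, f x ∂μ) ^ 2 ≤ (∫ x, w x * f x ^ 2 ∂μ) * ∫ x, (w x)⁻¹ ∂μ := by
  set φ : α → ℝ := fun x => |f x| * √(w x)
  set ψ : α → ℝ := fun x => √(w x)⁻¹
  have hwm : AEMeasurable w μ := by
    simpa only [Pi.inv_def, inv_inv] using hwinv.aemeasurable.inv
  have hφ_sq : (fun x => φ x ^ 2) =ᵐ[μ] fun x => w x * f x ^ 2 := by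
    filter_upwards [hw] with x hx
    rw [mul_pow, sq_abs, Real.sq_sqrt hx.le, mul_comm]
  have hψ_sq : (fun x => ψ x ^ 2) =ᵐ[μ] fun x => (w x)⁻¹ := by
    filter_upwards [hw] with x hx
    exact Real.sq_sqrt (inv_nonneg.2 hx.le)
  have hφψ : (fun x => φ x * ψ x) =ᵐ[μ] fun x => |f x| := by
    filter_upwards [hw] with x hx
    rw [mul_assoc, ← Real.sqrt_mul hx.le, mul_inv_cancel₀ hx.ne', Real.sqrt_one, mul_one]
  have hφ : MemLp φ 2 μ := (memLp_two_iff_integrable_sq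
    (hf.aemeasurable.abs.mul hwm.sqrt).aestronglyMeasurable).2 (hwf.congr hφ_sq.symm)
  have hψ : MemLp ψ 2 μ := (memLp_two_iff_integrable_sq
    hwinv.aemeasurable.sqrt.aestronglyMeasurable).2 (hwinv.congr hψ_sq.symm)
  have hcs := integral_mul_le_sqrt_mul_sqrt_of_nonneg
    (.of_forall fun x => mul_nonneg (abs_nonneg _) (Real.sqrt_nonneg _))
    (.of_forall fun x => Real.sqrt_nonneg _) hφ hψ
  rw [integral_congr_ae hφψ, integral_congr_ae hφ_sq, integral_congr_ae hψ_sq] at hcs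
  have hwf0 : 0 ≤ ∫ x, w x * f x ^ 2 ∂μ :=
    integral_nonneg_of_ae (hw.mono fun x hx => mul_nonneg hx.le (sq_nonneg _))
  have hwinv0 : 0 ≤ ∫ x, (w x)⁻¹ ∂μ :=
    integral_nonneg_of_ae (hw.mono fun x hx => inv_nonneg.2 hx.le)
  calc (∫ x, f x ∂μ) ^ 2 = |∫ x, f x ∂μ| ^ 2 := (sq_abs _).symm
    _ ≤ (√(∫ x, w x * f x ^ 2 ∂μ) * √(∫ x, (w x)⁻¹ ∂μ)) ^ 2 := by
      gcongr
      exact abs_integral_le_integral_abs.trans hcs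
    _ = (∫ x, w x * f x ^ 2 ∂μ) * ∫ x, (w x)⁻¹ ∂μ := by
      rw [mul_pow, Real.sq_sqrt hwf0, Real.sq_sqrt hwinv0]

end CauchySchwarz

lemma jwNorm_sq (a b : ℝ) (g : ℝ → ℝ) :
    jwNorm a b g ^ 2 = ∫ x in (0:ℝ)..1, jw a b x * g x ^ 2 :=
  Real.sq_sqrt (intervalIntegral.integral_nonneg zero_le_one fun _ hx =>
    mul_nonneg (jw_nonneg hx) (sq_nonneg _))

lemma setIntegral_Ioo_le_intervalIntegral {g : ℝ → ℝ} (hg : IntervalIntegrable g volume 0 1)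
    (hg0 : ∀ y ∈ Ioc (0:ℝ) 1, 0 ≤ g y) {x : ℝ} (hx : x ≤ 1) :
    ∫ y in Ioo 0 x, g y ≤ ∫ y in (0:ℝ)..1, g y := by
  rw [intervalIntegral.integral_of_le zero_le_one]
  exact setIntegral_mono_set hg.1 (ae_restrict_of_forall_mem measurableSet_Ioc hg0)
    (Ioo_subset_Ioc_self.trans (Ioc_subset_Ioc_right hx)).eventuallyLE

lemma sq_integral_le_betaf_mul_jwNorm_sq {a b : ℝ} (ha : a < 1) (hb : b < 1) {f : ℝ → ℝ}
    (hf : AEStronglyMeasurable f volume)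
    (hwf : IntervalIntegrable (fun x => jw a b x * f x ^ 2) volume 0 1) {x : ℝ}
    (hx : x ∈ Icc (0:ℝ) 1) :
    (∫ y in (0:ℝ)..x, f y) ^ 2 ≤ Betaf (1 - b) (1 - a) * jwNorm a b f ^ 2 := by
  have hsub : Ioo 0 x ⊆ Ioo 0 1 := Ioo_subset_Ioo_right hx.2
  have hsub' : Ioo 0 x ⊆ Ioc 0 1 := hsub.trans Ioo_subset_Ioc_self
  have hinv : IntervalIntegrable (jw (-a) (-b)) volume 0 1 := by
    simpa only [sub_sub_cancel_left] using
      intervalIntegrable_jw_sub_one (a := 1 - a) (b := 1 - b) (by linarith) (by linarith)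
  have hinv_val : ∫ y in (0:ℝ)..1, jw (-a) (-b) y = Betaf (1 - b) (1 - a) := by
    simpa only [sub_sub_cancel_left] using
      integral_jw_sub_one (a := 1 - a) (b := 1 - b) (by linarith) (by linarith)
  have hjw_inv : EqOn (jw (-a) (-b)) (fun y => (jw a b y)⁻¹) (Ioo 0 x) :=
    fun y hy => jw_neg (Ioo_subset_Icc_self (hsub hy))
  have hcs := sq_integral_le_integral_mul_sq_mul_integral_inv (μ := volume.restrict (Ioo 0 x))
    (ae_restrict_of_forall_mem measurableSet_Ioo fun y hy => jw_pos (hsub hy)) hf.restrict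
    (hwf.1.mono_set hsub') ((hinv.1.mono_set hsub').congr_fun hjw_inv measurableSet_Ioo)
  have hwf_le : ∫ y in Ioo 0 x, jw a b y * f y ^ 2 ≤ jwNorm a b f ^ 2 := by
    rw [jwNorm_sq]
    exact setIntegral_Ioo_le_intervalIntegral hwf
      (fun y hy => mul_nonneg (jw_nonneg (Ioc_subset_Icc_self hy)) (sq_nonneg _)) hx.2
  have hinv_le : ∫ y in Ioo 0 x, (jw a b y)⁻¹ ≤ Betaf (1 - b) (1 - a) := by
    rw [← setIntegral_congr_fun measurableSet_Ioo hjw_inv, ← hinv_val]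
    exact setIntegral_Ioo_le_intervalIntegral hinv
      (fun y hy => jw_nonneg (Ioc_subset_Icc_self hy)) hx.2
  rw [intervalIntegral.integral_of_le hx.1, integral_Ioc_eq_integral_Ioo, mul_comm]
  exact hcs.trans (mul_le_mul hwf_le hinv_le
    (setIntegral_nonneg measurableSet_Ioo fun y hy =>
      inv_nonneg.2 (jw_nonneg (Ioo_subset_Icc_self (hsub hy)))) (sq_nonneg _))

theorem jwNorm_div_integral_le {a b Km : ℝ} (ha₀ : 0 < a) (ha₁ : a < 1) (hb₀ : 0 < b)
    (hb₁ : b < 1) {K f : ℝ → ℝ} (hKm : 0 < Km) (hK : ∀ x ∈ Icc (0:ℝ) 1, Km ≤ K x)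
    (hf : AEStronglyMeasurable f volume)
    (hwf : IntervalIntegrable (fun x => jw a b x * f x ^ 2) volume 0 1) :
    jwNorm (a - 1) (b - 1) (fun x => (1 / K x) * ∫ y in (0:ℝ)..x, f y) ≤
      (1 / Km) * √(Betaf b a * Betaf (1 - b) (1 - a)) * jwNorm a b f := by
  set C := Betaf (1 - b) (1 - a) * jwNorm a b f ^ 2
  have hpoint : ∀ x ∈ Icc (0:ℝ) 1, jw (a - 1) (b - 1) x * ((1 / K x) * ∫ y in (0:ℝ)..x, f y) ^ 2
      ≤ C / Km ^ 2 * jw (a - 1) (b - 1) x := by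
    intro x hx
    have hKx : (1 / K x) ^ 2 ≤ (1 / Km) ^ 2 :=
      pow_le_pow_left₀ (one_div_nonneg.2 (hKm.trans_le (hK x hx)).le)
        (one_div_le_one_div_of_le hKm (hK x hx)) 2
    calc jw (a - 1) (b - 1) x * ((1 / K x) * ∫ y in (0:ℝ)..x, f y) ^ 2
        = jw (a - 1) (b - 1) x * ((1 / K x) ^ 2 * (∫ y in (0:ℝ)..x, f y) ^ 2) := by ring
      _ ≤ jw (a - 1) (b - 1) x * ((1 / Km) ^ 2 * C) := by
        gcongr
        · exact jw_nonneg hx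
        · exact sq_integral_le_betaf_mul_jwNorm_sq ha₁ hb₁ hf hwf hx
      _ = C / Km ^ 2 * jw (a - 1) (b - 1) x := by ring
  have hint : ∫ x in (0:ℝ)..1, jw (a - 1) (b - 1) x * ((1 / K x) * ∫ y in (0:ℝ)..x, f y) ^ 2
      ≤ C / Km ^ 2 * Betaf b a := by
    rw [← integral_jw_sub_one ha₀ hb₀, ← intervalIntegral.integral_const_mul,
      intervalIntegral.integral_of_le zero_le_one, intervalIntegral.integral_of_le zero_le_one]
    refine integral_mono_of_nonneg ?_ ((intervalIntegrable_jw_sub_one ha₀ hb₀).1.const_mul _)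
      (ae_restrict_of_forall_mem measurableSet_Ioc fun x hx => hpoint x (Ioc_subset_Icc_self hx))
    exact ae_restrict_of_forall_mem measurableSet_Ioc fun x hx =>
      mul_nonneg (jw_nonneg (Ioc_subset_Icc_self hx)) (sq_nonneg _)
  have hB : 0 ≤ Betaf b a * Betaf (1 - b) (1 - a) :=
    mul_nonneg (ProbabilityTheory.beta_pos hb₀ ha₀).le
      (ProbabilityTheory.beta_pos (by linarith) (by linarith)).le
  have hrhs : 0 ≤ (1 / Km) * √(Betaf b a * Betaf (1 - b) (1 - a)) * jwNorm a b f :=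
    mul_nonneg (mul_nonneg (one_div_nonneg.2 hKm.le) (Real.sqrt_nonneg _)) (Real.sqrt_nonneg _)
  rw [jwNorm, Real.sqrt_le_left hrhs, mul_pow, mul_pow, Real.sq_sqrt hB]
  calc _ ≤ C / Km ^ 2 * Betaf b a := hint
    _ = _ := by
      field_simp
      ring

/-- stability estimate for f₁. -/
theorem stmt2 (α β Km : ℝ) (hα : 1 < α ∧ α < 2) (hβ : α - 1 < β ∧ β < 1)
    (K f : ℝ → ℝ) (hKm : 0 < Km) (hK : ∀ x ∈ Set.Icc (0:ℝ) 1, Km ≤ K x)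
    (hf : Measurable f)
    (hfin : IntervalIntegrable (fun x => jw β (α - β) x * f x ^ 2) MeasureTheory.volume 0 1) :
    jwNorm (β - 1) (α - β - 1) (fun x => (1 / K x) * ∫ y in (0:ℝ)..x, f y) ≤
      (1 / Km) * Real.sqrt (Betaf (α - β) β * Betaf (1 - (α - β)) (1 - β)) *
        jwNorm β (α - β) f :=
  jwNorm_div_integral_le (by linarith) hβ.2 (by linarith) (by linarith) hKm hK
    hf.aestronglyMeasurable hfin
end

section
/- Let 1<α<2, α−1<β<1, set λ_j := ( sin(πα)/( sin(π(α−β)) + sin(πβ) ) )·Γ(j+α)/j!; let K:[0,1]→ℝ be measurable with 0<K_m≤K(x)≤K_M, let f:(0,1)→ℝ be measurable with ‖f‖_{ω^{(β,α−β)}} < ∞, and define f₁, f₂, the coefficients f_{k,j}, A, and c_j as in the context. Let j ∈ ℕ, j ≥ 1, and suppose for k = 1, 2 that Σ_{i=j}^∞ f_{k,i}²·( Γ(i+j+α−1)/Γ(i+α−1) )²·|‖G_{i−j}^{(β+j−1,α−β+j−1)}‖|² < ∞ (which says that the j-th derivative of f_k lies in L²_{ω^{(β+j−1,α−β+j−1)}}).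 Then Σ_{i=j}^∞ c_i²·( Γ(i+j+α+1)/Γ(i+α+1) )²·|‖G_{i−j}^{(α−β+j,β+j)}‖|² < ∞ (which says that the j-th derivative of u/ω^{(α−β,β)} lies in L²_{ω^{(α−β+j,β+j)}}). -/
open MeasureTheory Real Filter

lemma summable_sq_div_mul_of_le {u v d w w' : ℕ → ℝ} {A L : ℝ} (hw : ∀ n, 0 ≤ w n)
    (hle : ∀ n, w n / d n ^ 2 ≤ L * w' n)
    (hu : Summable fun n => u n ^ 2 * w' n) (hv : Summable fun n => v n ^ 2 * w' n) :
    Summable fun n => ((-u n + A * v n) / d n) ^ 2 * w n := by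
  refine Summable.of_nonneg_of_le (fun n => by have := hw n; positivity) (fun n => ?_)
    ((hu.mul_left (2 * L)).add (hv.mul_left (2 * A ^ 2 * L)))
  have hLw' : 0 ≤ L * w' n := (div_nonneg (hw n) (sq_nonneg _)).trans (hle n)
  have hsq : (-u n + A * v n) ^ 2 ≤ 2 * u n ^ 2 + 2 * A ^ 2 * v n ^ 2 := by
    nlinarith [sq_nonneg (u n + A * v n)]
  calc ((-u n + A * v n) / d n) ^ 2 * w n = (-u n + A * v n) ^ 2 * (w n / d n ^ 2) := by ring
    _ ≤ (2 * u n ^ 2 + 2 * A ^ 2 * v n ^ 2) * (L * w' n) :=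
        mul_le_mul hsq (hle n) (div_nonneg (hw n) (sq_nonneg _)) (by positivity)
    _ = 2 * L * (u n ^ 2 * w' n) + 2 * A ^ 2 * L * (v n ^ 2 * w' n) := by ring

section GNormVal

variable {a b : ℝ}

lemma GNormVal_comm (n : ℕ) : GNormVal n a b = GNormVal n b a := by
  simp only [GNormVal, mul_comm (Real.Gamma (n + a + 1)), add_right_comm _ a b]

lemma GNormVal_sq (n : ℕ) (ha : -1 < a) (hb : -1 < b) (hab : 0 < n + a + b + 1) :
    GNormVal n a b ^ 2 = Real.Gamma (n + a + 1) * Real.Gamma (n + b + 1) /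
      ((2 * n + a + b + 1) * Real.Gamma (n + 1) * Real.Gamma (n + a + b + 1)) := by
  have hn : (0 : ℝ) ≤ n := n.cast_nonneg
  have := Real.Gamma_pos_of_pos (show 0 < (n : ℝ) + a + 1 by linarith)
  have := Real.Gamma_pos_of_pos (show 0 < (n : ℝ) + b + 1 by linarith)
  have := Real.Gamma_pos_of_pos (show 0 < (n : ℝ) + 1 by linarith)
  have := Real.Gamma_pos_of_pos hab
  have : 0 < 2 * (n : ℝ) + a + b + 1 := by linarith
  exact Real.sq_sqrt (by positivity)

lemma GNormVal_add_one_sq (n : ℕ) (ha : -1 < a) (hb : -1 < b) :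
    GNormVal n (a + 1) (b + 1) ^ 2 = (n + 1) / (n + a + b + 2) * GNormVal (n + 1) a b ^ 2 := by
  have hn : (0 : ℝ) ≤ n := n.cast_nonneg
  have hs : (n : ℝ) + a + b + 2 ≠ 0 := by linarith
  have := (Real.Gamma_pos_of_pos (show 0 < (n : ℝ) + 1 by linarith)).ne'
  have := (Real.Gamma_pos_of_pos (show 0 < (n : ℝ) + a + b + 2 by linarith)).ne'
  rw [GNormVal_sq n (by linarith) (by linarith) (by linarith),
    GNormVal_sq (n + 1) ha hb (by push_cast; linarith)]
  push_cast
  rw [show (n : ℝ) + 1 + a + 1 = n + (a + 1) + 1 by ring,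
    show (n : ℝ) + 1 + b + 1 = n + (b + 1) + 1 by ring,
    show (n : ℝ) + 1 + 1 = (n + 1) + 1 by ring, Real.Gamma_add_one (s := n + 1) (by linarith),
    show (n : ℝ) + (a + 1) + (b + 1) + 1 = (n + a + b + 2) + 1 by ring, Real.Gamma_add_one hs,
    show (n : ℝ) + 1 + a + b + 1 = n + a + b + 2 by ring]
  field_simp
  ring

end GNormVal

noncomputable def lamConst (α β : ℝ) : ℝ :=
  Real.sin (π * α) / (Real.sin (π * (α - β)) + Real.sin (π * β))

lemma lamCoef_eq (α β : ℝ) (n : ℕ) :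
    lamCoef α β n = lamConst α β * Real.Gamma (n + α) / Real.Gamma (n + 1) := by
  rw [lamCoef, lamConst, Real.Gamma_nat_eq_factorial]

lemma lamConst_neg {α β : ℝ} (hα1 : 1 < α) (hβ1 : α - 1 < β) (hβ2 : β < 1) :
    lamConst α β < 0 := by
  have hsin_pos : ∀ x, 0 < x → x < 1 → 0 < Real.sin (π * x) := fun x hx0 hx1 =>
    Real.sin_pos_of_pos_of_lt_pi (by positivity) (by nlinarith [Real.pi_pos])
  have hnum : Real.sin (π * α) < 0 := by
    rw [show π * α = π * (α - 1) + π by ring, Real.sin_add_pi, neg_lt_zero]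
    exact hsin_pos _ (by linarith) (by linarith)
  have hden := add_pos (hsin_pos (α - β) (by linarith) (by linarith))
    (hsin_pos β (by linarith) hβ2)
  exact div_neg_of_neg_of_pos hnum hden

noncomputable def solutionWeight (α β : ℝ) (j m : ℕ) : ℝ :=
  (Real.Gamma ((m : ℝ) + (j : ℝ) + (j : ℝ) + α + 1) /
    Real.Gamma ((m : ℝ) + (j : ℝ) + α + 1)) ^ 2 * GNormVal m (α - β + j) (β + j) ^ 2

noncomputable def dataWeight (α β : ℝ) (j m : ℕ) : ℝ :=
  (Real.Gamma ((m : ℝ) + (j : ℝ) + (j : ℝ) + α - 1) /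
    Real.Gamma ((m : ℝ) + (j : ℝ) + α - 1)) ^ 2 * GNormVal m (β + j - 1) (α - β + j - 1) ^ 2

lemma solutionWeight_eq {α β : ℝ} (hβ0 : 0 < β) (hβα : β < α) (j m : ℕ) :
    solutionWeight α β j m = (m + 2 * j + α) * (m + 1) / (m + j + α) ^ 2 *
      dataWeight α β j (m + 1) := by
  have hm : (0 : ℝ) ≤ m := m.cast_nonneg
  have hj : (0 : ℝ) ≤ j := j.cast_nonneg
  have hGN := GNormVal_add_one_sq m (a := α - β + j - 1) (b := β + j - 1)
    (by linarith) (by linarith)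
  rw [sub_add_cancel, sub_add_cancel, GNormVal_comm (m + 1)] at hGN
  rw [solutionWeight, dataWeight, hGN, Real.Gamma_add_one (by linarith),
    Real.Gamma_add_one (by linarith)]
  push_cast
  rw [show (m : ℝ) + 1 + j + j + α - 1 = m + j + j + α by ring,
    show (m : ℝ) + 1 + j + α - 1 = m + j + α by ring]
  have : (m : ℝ) + j + α ≠ 0 := by linarith
  have : (m : ℝ) + (α - β + j - 1) + (β + j - 1) + 2 ≠ 0 := by linarith
  field_simp
  ring

lemma solutionWeight_div_lamCoef_sq_le {α β : ℝ} (hα1 : 1 < α)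
    (hβ1 : α - 1 < β) (hβ2 : β < 1) {j : ℕ} (hj : 1 ≤ j) (m : ℕ) :
    solutionWeight α β j m / lamCoef α β (m + j) ^ 2 ≤
      2 / lamConst α β ^ 2 * dataWeight α β j (m + 1) := by
  have hm : (0 : ℝ) ≤ m := m.cast_nonneg
  have hj' : (1 : ℝ) ≤ j := by exact_mod_cast hj
  have hC := (lamConst_neg hα1 hβ1 hβ2).ne
  have hΓα := Real.Gamma_pos_of_pos (show 0 < (m : ℝ) + j + α by linarith)
  have hΓ1 := Real.Gamma_pos_of_pos (show 0 < (m : ℝ) + j + 1 by linarith)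
  have hΓ : Real.Gamma (m + j + 1) ≤ Real.Gamma (m + j + α) :=
    Real.Gamma_strictMonoOn_Ici.monotoneOn (Set.mem_Ici.mpr (by linarith))
      (Set.mem_Ici.mpr (by linarith)) (by linarith)
  have hfactor : (m + 2 * j + α) * (m + 1) / (m + j + α) ^ 2 ≤ (2 : ℝ) := by
    rw [div_le_iff₀ (by positivity)]
    nlinarith
  have hratio : (Real.Gamma (m + j + 1) / Real.Gamma (m + j + α)) ^ 2 ≤ 1 := by
    rw [div_pow, div_le_one (by positivity)]
    exact pow_le_pow_left₀ hΓ1.le hΓ 2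
  have hdata : 0 ≤ dataWeight α β j (m + 1) := by rw [dataWeight]; positivity
  rw [solutionWeight_eq (by linarith) (by linarith), lamCoef_eq]
  push_cast
  calc (m + 2 * j + α) * (m + 1) / (m + j + α) ^ 2 * dataWeight α β j (m + 1) /
        (lamConst α β * Real.Gamma (m + j + α) / Real.Gamma (m + j + 1)) ^ 2
      = (m + 2 * j + α) * (m + 1) / (m + j + α) ^ 2 *
          (Real.Gamma (m + j + 1) / Real.Gamma (m + j + α)) ^ 2 *
          (dataWeight α β j (m + 1) / lamConst α β ^ 2) := by
        field_simp
    _ ≤ 2 * 1 * (dataWeight α β j (m + 1) / lamConst α β ^ 2) := by gcongr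
    _ = 2 / lamConst α β ^ 2 * dataWeight α β j (m + 1) := by ring

theorem stmt14_general (α β : ℝ) (hα : 1 < α ∧ α < 2) (hβ : α - 1 < β ∧ β < 1)
    (K f : ℝ → ℝ)
    (j : ℕ) (hj : 1 ≤ j)
    (h1 : Summable (fun m : ℕ => fCoef α β K f 1 (m + j) ^ 2 *
      (Real.Gamma ((m : ℝ) + (j : ℝ) + (j : ℝ) + α - 1) /
        Real.Gamma ((m : ℝ) + (j : ℝ) + α - 1)) ^ 2 *
      GNormVal m (β + j - 1) (α - β + j - 1) ^ 2))
    (h2 : Summable (fun m : ℕ => fCoef α β K f 2 (m + j) ^ 2 *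
      (Real.Gamma ((m : ℝ) + (j : ℝ) + (j : ℝ) + α - 1) /
        Real.Gamma ((m : ℝ) + (j : ℝ) + α - 1)) ^ 2 *
      GNormVal m (β + j - 1) (α - β + j - 1) ^ 2)) :
    Summable (fun m : ℕ => cCoef α β K f (m + j) ^ 2 *
      (Real.Gamma ((m : ℝ) + (j : ℝ) + (j : ℝ) + α + 1) /
        Real.Gamma ((m : ℝ) + (j : ℝ) + α + 1)) ^ 2 *
      GNormVal m (α - β + j) (β + j) ^ 2) := by
  have hshift : ∀ k, Summable (fun m => fCoef α β K f k (m + j) ^ 2 * dataWeight α β j m) →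
      Summable fun m => fCoef α β K f k (m + j + 1) ^ 2 * dataWeight α β j (m + 1) :=
    fun k hk => by simpa only [Nat.add_right_comm _ 1 j] using (summable_nat_add_iff 1).mpr hk
  have hc := summable_sq_div_mul_of_le (A := Aconst α β K f)
    (d := fun m => lamCoef α β (m + j)) (w := solutionWeight α β j)
    (fun m => by rw [solutionWeight]; positivity)
    (solutionWeight_div_lamCoef_sq_le hα.1 hβ.1 hβ.2 hj)
    (hshift 1 (by simpa only [dataWeight, mul_assoc] using h1))
    (hshift 2 (by simpa only [dataWeight, mul_assoc] using h2))
  simpa only [cCoef, solutionWeight, mul_assoc] using hc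

/-- regularity transfer from the data to the solution: if the j-th
derivatives of f₁, f₂ lie in the appropriate weighted L² spaces (expressed via
summability of coefficients), then so does the j-th derivative of u/ω^{(α-β,β)}. -/
theorem stmt14 (α β Km KM : ℝ) (hα : 1 < α ∧ α < 2) (hβ : α - 1 < β ∧ β < 1)
    (K f : ℝ → ℝ) (hKmeas : Measurable K) (hKm : 0 < Km)
    (hK : ∀ x ∈ Set.Icc (0:ℝ) 1, Km ≤ K x ∧ K x ≤ KM)
    (hf : Measurable f)
    (hfin : IntervalIntegrable (fun x => jw β (α - β) x * f x ^ 2) MeasureTheory.volume 0 1)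
    (j : ℕ) (hj : 1 ≤ j)
    (h1 : Summable (fun m : ℕ => fCoef α β K f 1 (m + j) ^ 2 *
      (Real.Gamma ((m : ℝ) + (j : ℝ) + (j : ℝ) + α - 1) /
        Real.Gamma ((m : ℝ) + (j : ℝ) + α - 1)) ^ 2 *
      GNormVal m (β + j - 1) (α - β + j - 1) ^ 2))
    (h2 : Summable (fun m : ℕ => fCoef α β K f 2 (m + j) ^ 2 *
      (Real.Gamma ((m : ℝ) + (j : ℝ) + (j : ℝ) + α - 1) /
        Real.Gamma ((m : ℝ) + (j : ℝ) + α - 1)) ^ 2 *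
      GNormVal m (β + j - 1) (α - β + j - 1) ^ 2)) :
    Summable (fun m : ℕ => cCoef α β K f (m + j) ^ 2 *
      (Real.Gamma ((m : ℝ) + (j : ℝ) + (j : ℝ) + α + 1) /
        Real.Gamma ((m : ℝ) + (j : ℝ) + α + 1)) ^ 2 *
      GNormVal m (α - β + j) (β + j) ^ 2) :=
  stmt14_general α β hα hβ K f j hj h1 h2
end
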